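/- arXiv:1603.00956 — 2 statements merged into one kernel-verified Lean document; each statement's English description precedes it below -/
import Mathlib

section
/- For every integer g ≥ 1 and every s ∈ ℂ, one has Γ_g(s) · Γ_g(s + 1/2) = π^{g²/2} · 2^{g(g+1)/2 − 2gs} · ∏_{i=1}^{g} Γ(2s − i + 1), where Γ is the complex Gamma function (with the Mathlib convention Γ = 0 at non-positive integers). -/
open Finset

/-- The complex multivariate Gamma function
`Γ_g(s) = π^(g(g−1)/4) · ∏_{i=1}^g Γ(s − (i−1)/2)`. -/
noncomputable def mvGammaC (g : ℕ) (s : ℂ) : ℂ :=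
  (Real.pi : ℂ) ^ ((g * (g - 1) : ℂ) / 4) *
    ∏ i ∈ Finset.Icc 1 g, Complex.Gamma (s - ((i : ℂ) - 1) / 2)

private lemma prod_cpow_aux (t : Finset ℕ) (c : ℂ) (hc : c ≠ 0) (f : ℕ → ℂ) :
    ∏ i ∈ t, c ^ f i = c ^ (∑ i ∈ t, f i) := by
  induction t using Finset.cons_induction with
  | empty => simp
  | cons a t ha ih => rw [Finset.prod_cons, Finset.sum_cons, Complex.cpow_add _ _ hc, ih]

private lemma sum_Icc_cast (g : ℕ) :
    ∑ i ∈ Finset.Icc 1 g, (i : ℂ) = (g : ℂ) * (g + 1) / 2 := by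
  induction g with
  | zero => simp
  | succ n ih =>
      rw [Finset.sum_Icc_succ_top (by omega : 1 ≤ n + 1), ih]
      push_cast
      ring

/-- the duplication formula
`Γ_g(s) · Γ_g(s + 1/2) = π^(g²/2) · 2^(g(g+1)/2 − 2gs) · ∏_{i=1}^g Γ(2s − i + 1)`. -/
theorem mvGammaC_mul_add_half (g : ℕ) (hg : 1 ≤ g) (s : ℂ) :
    mvGammaC g s * mvGammaC g (s + 1 / 2) =
      (Real.pi : ℂ) ^ ((g ^ 2 : ℂ) / 2) *
        (2 : ℂ) ^ ((g * (g + 1) : ℂ) / 2 - 2 * g * s) *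
        ∏ i ∈ Finset.Icc 1 g, Complex.Gamma (2 * s - (i : ℂ) + 1) := by
  have hpi : (Real.pi : ℂ) ≠ 0 := Complex.ofReal_ne_zero.mpr Real.pi_ne_zero
  have key : ∀ i : ℕ,
      Complex.Gamma (s - ((i : ℂ) - 1) / 2) *
        Complex.Gamma (s + 1 / 2 - ((i : ℂ) - 1) / 2) =
      Complex.Gamma (2 * s - (i : ℂ) + 1) * (2 : ℂ) ^ ((i : ℂ) - 2 * s) *
        (Real.pi : ℂ) ^ ((1 : ℂ) / 2) := by
    intro i
    have h := Complex.Gamma_mul_Gamma_add_half (s - ((i : ℂ) - 1) / 2)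
    have h1 : s - ((i : ℂ) - 1) / 2 + 1 / 2 = s + 1 / 2 - ((i : ℂ) - 1) / 2 := by ring
    have h2 : 2 * (s - ((i : ℂ) - 1) / 2) = 2 * s - (i : ℂ) + 1 := by ring
    have h3 : 1 - (2 * s - (i : ℂ) + 1) = (i : ℂ) - 2 * s := by ring
    rw [h1, h2, h3] at h
    rw [h]
    congr 1
    rw [Real.sqrt_eq_rpow, Complex.ofReal_cpow Real.pi_pos.le]
    norm_num
  unfold mvGammaC
  rw [show ((Real.pi : ℂ) ^ ((g * (g - 1) : ℂ) / 4) * ∏ i ∈ Finset.Icc 1 g,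
      Complex.Gamma (s - ((i : ℂ) - 1) / 2)) *
      ((Real.pi : ℂ) ^ ((g * (g - 1) : ℂ) / 4) * ∏ i ∈ Finset.Icc 1 g,
      Complex.Gamma (s + 1 / 2 - ((i : ℂ) - 1) / 2)) =
      (Real.pi : ℂ) ^ ((g * (g - 1) : ℂ) / 4) * (Real.pi : ℂ) ^ ((g * (g - 1) : ℂ) / 4) *
      ∏ i ∈ Finset.Icc 1 g,
        (Complex.Gamma (s - ((i : ℂ) - 1) / 2) *
          Complex.Gamma (s + 1 / 2 - ((i : ℂ) - 1) / 2)) by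
    rw [Finset.prod_mul_distrib]; ring]
  rw [Finset.prod_congr rfl fun i _ => key i]
  rw [Finset.prod_mul_distrib, Finset.prod_mul_distrib, Finset.prod_const,
    Nat.card_Icc, prod_cpow_aux _ _ (two_ne_zero)]
  have hsum : ∑ i ∈ Finset.Icc 1 g, ((i : ℂ) - 2 * s) =
      (g * (g + 1) : ℂ) / 2 - 2 * g * s := by
    rw [Finset.sum_sub_distrib, sum_Icc_cast, Finset.sum_const, Nat.card_Icc]
    simp only [nsmul_eq_mul]
    push_cast [Nat.add_sub_cancel]
    ring
  rw [hsum]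
  have hcard : g + 1 - 1 = g := by omega
  rw [hcard, ← Complex.cpow_nat_mul]
  rw [← Complex.cpow_add _ _ hpi]
  have hπ : (Real.pi : ℂ) ^ ((g ^ 2 : ℂ) / 2) =
      (Real.pi : ℂ) ^ ((g * (g - 1) : ℂ) / 4 + (g * (g - 1) : ℂ) / 4) *
        (Real.pi : ℂ) ^ ((g : ℂ) * (1 / 2)) := by
    rw [← Complex.cpow_add _ _ hpi]
    congr 1
    ring
  rw [hπ]
  ring
end

section
/- Let K be a nontrivially normed field, let g ≥ 1, let p ∈ K, and let a ∈ K. Let L : K × K → K be (Fréchet) differentiable at (a, 0) and suppose: (i) there is a neighborhood U of a such that L(k, k − a) = 0 for all k ∈ U (vanishing along the line of trivial zeros); (ii) there are functions B₁, …, B_g : K → K and L* : K → K, all differentiable at a, with B_i(a) ≠ 0 for all i and B_g(a) = 1, such that L(k, 0) = (∏_{i=1}^{g} (1 − B_i(k)⁻¹ · p^{g−i})) · L*(k) for all k in a neighborhood of a. Then the derivative at 0 of the one-variable function s ↦ L(a, s) equals −B_g′(a) · (∏_{i=1}^{g−1} (1 − B_i(a)⁻¹ · p^{g−i})) · L*(a).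 -/
open Finset

/-!
Differentiability of `L` at `(a, 0)` makes `∂L/∂s` the derivative along the diagonal direction
`(1, 1)` minus `∂L/∂k`. The first vanishes because `L` vanishes on the line `s = k - a`. The
second is read off the factorisation on `s = 0`: the `g`-th Euler factor `1 - B_g⁻¹` has a zero at
`a`, so the derivative of the product there is `B_g'(a)` times the value of the remaining factors.
-/

theorem HasDerivAt.smul_continuousAt_of_eq_zero {𝕜 F : Type*} [NontriviallyNormedField 𝕜]
    [NormedAddCommGroup F] [NormedSpace 𝕜 F] {f : 𝕜 → 𝕜} {r : 𝕜 → F} {f' : 𝕜} {x : 𝕜}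
    (hf : HasDerivAt f f' x) (hfx : f x = 0) (hr : ContinuousAt r x) :
    HasDerivAt (fun y => f y • r y) (f' • r x) x := by
  rw [hasDerivAt_iff_tendsto_slope] at hf ⊢
  have hslope : slope (fun y => f y • r y) x = fun y => slope f x y • r y := by
    ext y
    simp only [slope_def_module, hfx, zero_smul, sub_zero, smul_assoc]
  rw [hslope]
  exact hf.smul (hr.tendsto.mono_left nhdsWithin_le_nhds)

theorem deriv_snd_eq_deriv_diag_sub_deriv_fst {𝕜 F : Type*} [NontriviallyNormedField 𝕜]
    [NormedAddCommGroup F] [NormedSpace 𝕜 F] {L : 𝕜 × 𝕜 → F} {a b : 𝕜}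
    (hL : DifferentiableAt 𝕜 L (a, b)) :
    deriv (fun s => L (a, s)) b =
      deriv (fun k => L (k, k - a + b)) a - deriv (fun k => L (k, b)) a := by
  have hL' := hL.hasFDerivAt
  have hsnd : HasDerivAt (fun s => L (a, s)) (fderiv 𝕜 L (a, b) (0, 1)) b :=
    hL'.comp_hasDerivAt b ((hasDerivAt_const b a).prodMk (hasDerivAt_id b))
  have hdiag : HasDerivAt (fun k => L (k, k - a + b)) (fderiv 𝕜 L (a, b) (1, 1)) a :=
    hL'.comp_hasDerivAt_of_eq a ((hasDerivAt_id a).prodMk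
      (((hasDerivAt_id a).sub_const a).add_const b)) (by simp)
  have hfst : HasDerivAt (fun k => L (k, b)) (fderiv 𝕜 L (a, b) (1, 0)) a :=
    hL'.comp_hasDerivAt a ((hasDerivAt_id a).prodMk (hasDerivAt_const a b))
  rw [hsnd.deriv, hdiag.deriv, hfst.deriv, ← map_sub]
  congr 1
  ext <;> simp

theorem hasDerivAt_one_sub_inv_of_eq_one {𝕜 : Type*} [NontriviallyNormedField 𝕜]
    {B : 𝕜 → 𝕜} {a : 𝕜} (hB : DifferentiableAt 𝕜 B a) (hBa : B a = 1) :
    HasDerivAt (fun k => 1 - (B k)⁻¹) (deriv B a) a := by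
  simpa [hBa] using (hB.hasDerivAt.inv (by simp [hBa])).const_sub 1

/-- Greenberg–Stevens: if the two-variable `p`-adic `L`-function
`L` vanishes along the line of trivial zeros and factors on the line `s = 0`
through the improved `L`-function `L*` with Euler factors `1 − B_i(k)⁻¹·p^(g−i)`
(the `g`-th of which has a trivial zero at `k = a`), then the derivative at `0`
of `s ↦ L(a, s)` equals
`−B_g′(a) · (∏_{i=1}^{g−1} (1 − B_i(a)⁻¹·p^(g−i))) · L*(a)`. -/
theorem greenberg_stevens_derivative
    (K : Type*) [NontriviallyNormedField K]
    (g : ℕ) (hg : 1 ≤ g) (p a : K)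
    (L : K × K → K) (hL : DifferentiableAt K L (a, 0))
    (hvan : ∃ U ∈ nhds a, ∀ k ∈ U, L (k, k - a) = 0)
    (B : ℕ → K → K) (Lstar : K → K)
    (hB : ∀ i ∈ Finset.Icc 1 g, DifferentiableAt K (B i) a)
    (hLstar : DifferentiableAt K Lstar a)
    (hBne : ∀ i ∈ Finset.Icc 1 g, B i a ≠ 0)
    (hBg : B g a = 1)
    (hfact : ∃ U ∈ nhds a, ∀ k ∈ U,
      L (k, 0) = (∏ i ∈ Finset.Icc 1 g, (1 - (B i k)⁻¹ * p ^ (g - i))) * Lstar k) :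
    deriv (fun s => L (a, s)) 0 =
      - (deriv (B g) a *
          (∏ i ∈ Finset.Icc 1 (g - 1), (1 - (B i a)⁻¹ * p ^ (g - i))) * Lstar a) := by
  obtain ⟨n, rfl⟩ := Nat.exists_eq_add_of_le' hg
  obtain ⟨U, hU, hLU⟩ := hvan
  obtain ⟨V, hV, hLV⟩ := hfact
  have hIcc : ∀ i ∈ Icc 1 n, i ∈ Icc 1 (n + 1) := fun i hi =>
    Icc_subset_Icc_right n.le_succ hi
  have hdiag : deriv (fun k => L (k, k - a)) a = 0 := by
    rw [Filter.EventuallyEq.deriv_eq (f := fun _ => 0) (Filter.eventually_of_mem hU hLU),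
      deriv_const]
  have hcont : ContinuousAt (fun k => (∏ i ∈ Icc 1 n, (1 - (B i k)⁻¹ * p ^ (n + 1 - i))) *
      Lstar k) a :=
    (tendsto_finsetProd _ fun i hi => ((((hB i (hIcc i hi)).continuousAt.inv₀
      (hBne i (hIcc i hi))).mul continuousAt_const).const_sub 1)).mul hLstar.continuousAt
  have hedge : HasDerivAt (fun k => L (k, 0)) (deriv (B (n + 1)) a *
      ((∏ i ∈ Icc 1 n, (1 - (B i a)⁻¹ * p ^ (n + 1 - i))) * Lstar a)) a := by
    refine ((hasDerivAt_one_sub_inv_of_eq_one (hB _ (by simp)) hBg).smul_continuousAt_of_eq_zero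
      (by simp [hBg]) hcont).congr_of_eventuallyEq (Filter.eventually_of_mem hV fun k hk => ?_)
    dsimp only
    rw [hLV k hk, prod_Icc_succ_top (by omega)]
    simp only [Nat.sub_self, pow_zero, mul_one, smul_eq_mul]
    ring
  rw [deriv_snd_eq_deriv_diag_sub_deriv_fst hL]
  simp only [add_zero, Nat.add_sub_cancel]
  rw [hdiag, hedge.deriv]
  ring
end
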